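/- Consider an impulsive solution such that, for some constants λ* ≥ 0 and T_* > 0, one has 0 ≤ λₙ ≤ λ* and Tₙ ≥ T_* for all n (so that tₙ → ∞). Then the output satisfies the ultimate upper bound limsup_{t→∞} ȳ(t) ≤ (g₁g₂/(a₂a₃)) · λ*/(1 − e^{−a₁T_*}). -/

import Mathlib

open Matrix

/-- The system matrix of the third-order PK model. -/
noncomputable def Amat (a₁ a₂ a₃ g₁ g₂ : ℝ) : Matrix (Fin 3) (Fin 3) ℝ :=
  !![-a₁, 0, 0; g₁, -a₂, 0; 0, g₂, -a₃]

/-- The input vector `B = (1,0,0)ᵀ`. -/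
noncomputable def Bvec : Fin 3 → ℝ := ![1, 0, 0]

/-- The output map `C x = x₃`. -/
noncomputable def Cout (x : Fin 3 → ℝ) : ℝ := x 2

/-!
Each compartment of the cascade obeys `x' = g u - a x`, so it relaxes exponentially towards
`g/a` times any eventual upper bound of its input, and the gluing `Xₙ₊₁ = e^{TₙA}(…)` makes
these bounds pass from one inter-dose interval to the next. The first compartment only receives
the doses: between doses it decays by at least `κ = e^{-a₁T_*}`, so its value right after a dose
satisfies `bₙ₊₁ ≤ κ bₙ + λ*` and is eventually below anything larger than `λ*/(1 - κ)`.
Propagating through the second and third compartments multiplies this bound by `g₁/a₂` and `g₂/a₃`.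
-/

open Filter Topology

theorem exp_neg_mul_mul_le_max {a τ : ℝ} (ha : 0 ≤ a) (hτ : 0 ≤ τ) (x : ℝ) :
    Real.exp (-a * τ) * x ≤ max x 0 := by
  have h1 : Real.exp (-a * τ) ≤ 1 := Real.exp_le_one_iff.2 (by nlinarith)
  calc Real.exp (-a * τ) * x ≤ Real.exp (-a * τ) * max x 0 := by gcongr; exact le_max_left x 0
    _ ≤ max x 0 := mul_le_of_le_one_left (le_max_right x 0) h1

theorem le_exp_mul_of_hasDerivAt_le {h h' : ℝ → ℝ} {a τ : ℝ}
    (hd : ∀ s, 0 ≤ s → HasDerivAt h (h' s) s) (hle : ∀ s, 0 ≤ s → h' s ≤ -a * h s)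
    (hτ : 0 ≤ τ) : h τ ≤ Real.exp (-a * τ) * h 0 := by
  set φ : ℝ → ℝ := fun s => Real.exp (a * s) * h s with hφ_def
  have hφ : ∀ s, 0 ≤ s →
      HasDerivAt φ (Real.exp (a * s) * a * h s + Real.exp (a * s) * h' s) s := by
    intro s hs
    have := ((hasDerivAt_id s).const_mul a).exp.mul (hd s hs)
    simp only [id, mul_one] at this
    exact this
  have hanti : AntitoneOn φ (Set.Ici 0) := by
    refine antitoneOn_of_deriv_nonpos (convex_Ici 0)
      (fun s hs => (hφ s hs).continuousAt.continuousWithinAt) (fun s hs => ?_) (fun s hs => ?_)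
    · rw [interior_Ici] at hs
      exact (hφ s (le_of_lt hs)).differentiableAt.differentiableWithinAt
    · rw [interior_Ici] at hs
      rw [(hφ s (le_of_lt hs)).deriv]
      nlinarith [hle s (le_of_lt hs), Real.exp_pos (a * s)]
  have hφτ : φ τ ≤ h 0 := by simpa [φ] using hanti Set.self_mem_Ici hτ hτ
  calc h τ = Real.exp (-a * τ) * φ τ := by
        rw [hφ_def, ← mul_assoc, ← Real.exp_add]; simp
    _ ≤ Real.exp (-a * τ) * h 0 := by gcongr

theorem eventually_le_of_le_mul_add {b : ℕ → ℝ} {κ c : ℝ} (hκ0 : 0 ≤ κ) (hκ1 : κ < 1)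
    (hb : ∀ n, b (n + 1) ≤ κ * b n + c) : ∀ L > c / (1 - κ), ∀ᶠ n in atTop, b n ≤ L := by
  intro L hL
  set K := c / (1 - κ) with hK_def
  have hK : κ * K + c = K := by
    rw [hK_def]; field_simp [(sub_pos.2 hκ1).ne']; ring
  have hgeom : ∀ n, b n - K ≤ κ ^ n * (b 0 - K) := by
    intro n
    induction n with
    | zero => simp
    | succ n ih =>
      calc b (n + 1) - K ≤ κ * (b n - K) := by linarith [hb n]
        _ ≤ κ * (κ ^ n * (b 0 - K)) := mul_le_mul_of_nonneg_left ih hκ0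
        _ = κ ^ (n + 1) * (b 0 - K) := by ring
  have hlim : Tendsto (fun n => κ ^ n * (b 0 - K)) atTop (𝓝 0) := by
    simpa using (tendsto_pow_atTop_nhds_zero_of_lt_one hκ0 hκ1).mul_const (b 0 - K)
  filter_upwards [hlim.eventually_lt_const (sub_pos.2 hL)] with n hn
  linarith [hgeom n]

theorem tendsto_atTop_of_le_sub {t : ℕ → ℝ} {T : ℝ} (hT : 0 < T)
    (hgap : ∀ n, T ≤ t (n + 1) - t n) : Tendsto t atTop atTop := by
  have hgrow : ∀ n : ℕ, t 0 + n * T ≤ t n := by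
    intro n
    induction n with
    | zero => simp
    | succ n ih => push_cast; linarith [hgap n]
  exact tendsto_atTop_mono hgrow <|
    tendsto_atTop_add_const_left _ _ (tendsto_natCast_atTop_atTop.atTop_mul_const hT)

theorem exists_mem_Ioc_of_lt_of_le {α : Type*} [LinearOrder α] {t : ℕ → α} {s : α}
    (h0 : t 0 < s) (hex : ∃ j, s ≤ t j) : ∃ n, s ∈ Set.Ioc (t n) (t (n + 1)) := by
  classical
  obtain ⟨n, hn⟩ : ∃ n, Nat.find hex = n + 1 :=
    Nat.exists_eq_succ_of_ne_zero fun h => (h ▸ Nat.find_spec hex).not_gt h0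
  exact ⟨n, not_le.1 (Nat.find_min hex (by omega)), hn ▸ Nat.find_spec hex⟩

/-- `hK` is needed because the real `limsup` of a function that is not cobounded is `0`. -/
theorem limsup_le_of_forall_gt {α : Type*} {l : Filter α} {u : α → ℝ} {K : ℝ} (hK : 0 ≤ K)
    (h : ∀ V > K, ∀ᶠ x in l, u x ≤ V) : limsup u l ≤ K := by
  by_cases hc : l.IsCoboundedUnder (· ≤ ·) u
  · exact le_of_forall_gt_imp_ge_of_dense fun V hV => limsup_le_of_le hc (h V hV)
  · rwa [Real.limsup_of_not_isCoboundedUnder hc]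

theorem eventually_forall_le_of_decay {t : ℕ → ℝ} (ht : Monotone t)
    (htop : Tendsto t atTop atTop) {a δ : ℝ} (ha : 0 < a) (hδ : 0 < δ) {h : ℕ → ℝ → ℝ} {m : ℕ}
    (hdecay : ∀ n ≥ m, ∀ τ ≥ 0, h n τ ≤ Real.exp (-a * τ) * h n 0)
    (hlink : ∀ n, h (n + 1) 0 = h n (t (n + 1) - t n)) :
    ∀ᶠ n in atTop, ∀ τ ≥ 0, h n τ ≤ δ := by
  have hchain : ∀ n ≥ m, h n 0 ≤ Real.exp (-a * (t n - t m)) * h m 0 := by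
    intro n hn
    induction n, hn using Nat.le_induction with
    | base => simp
    | succ n hn ih =>
      have hstep := hdecay n hn _ (sub_nonneg.2 (ht n.le_succ))
      calc h (n + 1) 0 ≤ Real.exp (-a * (t (n + 1) - t n)) * h n 0 := hlink n ▸ hstep
        _ ≤ Real.exp (-a * (t (n + 1) - t n)) * (Real.exp (-a * (t n - t m)) * h m 0) := by
          gcongr
        _ = Real.exp (-a * (t (n + 1) - t m)) * h m 0 := by
          rw [← mul_assoc, ← Real.exp_add]; ring_nf
  have hlim : Tendsto (fun n => Real.exp (-a * (t n - t m)) * h m 0) atTop (𝓝 0) := by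
    have hexp := Real.tendsto_exp_atBot.comp
      ((tendsto_atTop_add_const_right _ (-t m) htop).const_mul_atTop_of_neg (neg_neg_of_pos ha))
    simpa [Function.comp_def, ← sub_eq_add_neg] using hexp.mul_const (h m 0)
  filter_upwards [eventually_ge_atTop m, hlim.eventually_lt_const hδ] with n hn hsmall τ hτ
  calc h n τ ≤ Real.exp (-a * τ) * h n 0 := hdecay n hn τ hτ
    _ ≤ max (h n 0) 0 := exp_neg_mul_mul_le_max ha.le hτ _
    _ ≤ δ := max_le ((hchain n hn).trans hsmall.le) hδ.le

theorem eventually_forall_le_of_hasDerivAt {t : ℕ → ℝ} (ht : Monotone t)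
    (htop : Tendsto t atTop atTop) {a g U : ℝ} (ha : 0 < a) (hg : 0 ≤ g) {f u : ℕ → ℝ → ℝ}
    (hf : ∀ n τ, HasDerivAt (f n) (g * u n τ - a * f n τ) τ)
    (hlink : ∀ n, f (n + 1) 0 = f n (t (n + 1) - t n))
    (hu : ∀ U' > U, ∀ᶠ n in atTop, ∀ τ ≥ 0, u n τ ≤ U') :
    ∀ V > g * U / a, ∀ᶠ n in atTop, ∀ τ ≥ 0, f n τ ≤ V := by
  intro V hV
  obtain ⟨U', hU'V, hUU'⟩ : ∃ U', g * U' / a < V ∧ U < U' := by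
    have hcont : Tendsto (fun x => g * x / a) (𝓝[>] U) (𝓝 (g * U / a)) :=
      ((by fun_prop : Continuous fun x : ℝ => g * x / a).tendsto U).mono_left nhdsWithin_le_nhds
    exact ((hcont.eventually_lt_const hV).and self_mem_nhdsWithin).exists
  obtain ⟨m, hm⟩ := eventually_atTop.1 (hu U' hUU')
  have hdecay : ∀ n ≥ m, ∀ τ ≥ 0,
      f n τ - g * U' / a ≤ Real.exp (-a * τ) * (f n 0 - g * U' / a) := by
    intro n hn τ hτ
    refine le_exp_mul_of_hasDerivAt_le (fun s _ => (hf n s).sub_const _) (fun s hs => ?_) hτ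
    have hcancel : a * (g * U' / a) = g * U' := mul_div_cancel₀ _ ha.ne'
    nlinarith [mul_le_mul_of_nonneg_left (hm n hn s hs) hg]
  filter_upwards [eventually_forall_le_of_decay ht htop ha (sub_pos.2 hU'V) hdecay
    (fun n => by rw [hlink])] with n hn τ hτ
  linarith [hn τ hτ]

theorem eventually_forall_le_of_impulsive {t : ℕ → ℝ} {a T c : ℝ} (ha : 0 < a) (hT : 0 < T)
    (hc : 0 ≤ c) (hgap : ∀ n, T ≤ t (n + 1) - t n) {f : ℕ → ℝ → ℝ}
    (hf : ∀ n τ, HasDerivAt (f n) (-a * f n τ) τ)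
    (hjump : ∀ n, f (n + 1) 0 ≤ f n (t (n + 1) - t n) + c) :
    ∀ L > c / (1 - Real.exp (-a * T)), ∀ᶠ n in atTop, ∀ τ ≥ 0, f n τ ≤ L := by
  have hdecay : ∀ n, ∀ τ ≥ 0, f n τ ≤ Real.exp (-a * τ) * f n 0 := fun n τ hτ =>
    le_exp_mul_of_hasDerivAt_le (fun s _ => hf n s) (fun _ _ => le_rfl) hτ
  have hκ1 : Real.exp (-a * T) < 1 := Real.exp_lt_one_iff.2 (by nlinarith)
  have hstep : ∀ n, max (f (n + 1) 0) 0 ≤ Real.exp (-a * T) * max (f n 0) 0 + c := by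
    intro n
    have hT' : Real.exp (-a * (t (n + 1) - t n)) ≤ Real.exp (-a * T) :=
      Real.exp_le_exp.2 (by nlinarith [hgap n])
    have hsub : 0 ≤ t (n + 1) - t n := hT.le.trans (hgap n)
    refine max_le ?_ (by positivity)
    calc f (n + 1) 0 ≤ Real.exp (-a * (t (n + 1) - t n)) * f n 0 + c :=
          (hjump n).trans (by linarith [hdecay n _ hsub])
      _ ≤ Real.exp (-a * (t (n + 1) - t n)) * max (f n 0) 0 + c := by
          gcongr; exact le_max_left _ _
      _ ≤ Real.exp (-a * T) * max (f n 0) 0 + c := by gcongr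
  intro L hL
  filter_upwards [eventually_le_of_le_mul_add (b := fun n => max (f n 0) 0) (Real.exp_pos _).le hκ1 hstep
    L hL] with n hn τ hτ
  exact (hdecay n τ hτ).trans ((exp_neg_mul_mul_le_max ha.le hτ _).trans hn)

theorem limsup_le_of_forall_gt_of_mem_Ioc {t : ℕ → ℝ} (ht : Monotone t)
    (htop : Tendsto t atTop atTop) {w : ℕ → ℝ → ℝ} {y : ℝ → ℝ}
    (hy : ∀ n, ∀ s ∈ Set.Ioc (t n) (t (n + 1)), y s = w n (s - t n)) {K : ℝ} (hK : 0 ≤ K)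
    (hw : ∀ V > K, ∀ᶠ n in atTop, ∀ τ ≥ 0, w n τ ≤ V) : limsup y atTop ≤ K := by
  refine limsup_le_of_forall_gt hK fun V hV => ?_
  obtain ⟨N, hN⟩ := eventually_atTop.1 (hw V hV)
  filter_upwards [eventually_gt_atTop (t N)] with s hs
  obtain ⟨n, hn⟩ := exists_mem_Ioc_of_lt_of_le ((ht N.zero_le).trans_lt hs)
    (htop.eventually_ge_atTop s).exists
  have hNn : N ≤ n := by
    by_contra! hlt
    exact (hn.2.trans (ht hlt)).not_gt hs
  rw [hy n s hn]
  exact hN n hNn _ (sub_nonneg.2 hn.1.le)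

section MatrixExp

attribute [local instance] Matrix.linftyOpNormedRing Matrix.linftyOpNormedAlgebra

theorem hasDerivAt_exp_smul_mulVec {ι : Type*} [Fintype ι] [DecidableEq ι]
    (A : Matrix ι ι ℝ) (v : ι → ℝ) (τ : ℝ) :
    HasDerivAt (fun s : ℝ => NormedSpace.exp (s • A) *ᵥ v)
      (A *ᵥ (NormedSpace.exp (τ • A) *ᵥ v)) τ := by
  let L : Matrix ι ι ℝ →ₗ[ℝ] ι → ℝ :=
    { toFun := fun M => M *ᵥ v
      map_add' := fun M N => Matrix.add_mulVec M N v
      map_smul' := fun c M => Matrix.smul_mulVec c M v }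
  rw [Matrix.mulVec_mulVec]
  exact (LinearMap.toContinuousLinearMap L).hasFDerivAt.comp_hasDerivAt τ
    (hasDerivAt_exp_smul_const' A τ)

end MatrixExp

theorem Amat_mulVec (a₁ a₂ a₃ g₁ g₂ : ℝ) (w : Fin 3 → ℝ) :
    Amat a₁ a₂ a₃ g₁ g₂ *ᵥ w = ![-a₁ * w 0, g₁ * w 0 - a₂ * w 1, g₂ * w 1 - a₃ * w 2] := by
  ext i
  fin_cases i <;> simp [Amat, Matrix.mulVec, dotProduct, Fin.sum_univ_three] <;> ring

noncomputable def pkFlow (a₁ a₂ a₃ g₁ g₂ : ℝ) (v : Fin 3 → ℝ) (s : ℝ) : Fin 3 → ℝ :=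
  NormedSpace.exp (s • Amat a₁ a₂ a₃ g₁ g₂) *ᵥ v

theorem pkFlow_zero (a₁ a₂ a₃ g₁ g₂ : ℝ) (v : Fin 3 → ℝ) : pkFlow a₁ a₂ a₃ g₁ g₂ v 0 = v := by
  simp [pkFlow]

theorem hasDerivAt_pkFlow (a₁ a₂ a₃ g₁ g₂ : ℝ) (v : Fin 3 → ℝ) (τ : ℝ) :
    HasDerivAt (pkFlow a₁ a₂ a₃ g₁ g₂ v)
      (let x := pkFlow a₁ a₂ a₃ g₁ g₂ v τ
       ![-a₁ * x 0, g₁ * x 0 - a₂ * x 1, g₂ * x 1 - a₃ * x 2]) τ := by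
  rw [← Amat_mulVec]
  exact hasDerivAt_exp_smul_mulVec _ v τ

theorem ultimate_upper_bound
    (a₁ a₂ a₃ g₁ g₂ : ℝ)
    (ha₁ : 0 < a₁) (ha₂ : 0 < a₂) (ha₃ : 0 < a₃) (hg₁ : 0 < g₁) (hg₂ : 0 < g₂)
    (lamStar Tstar : ℝ) (hTstar : 0 < Tstar)
    (t : ℕ → ℝ)
    (lam : ℕ → ℝ) (X : ℕ → Fin 3 → ℝ) (ybar : ℝ → ℝ)
    (hlam : ∀ n, 0 ≤ lam n ∧ lam n ≤ lamStar)
    (hT : ∀ n, Tstar ≤ t (n + 1) - t n)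
    (hX : ∀ n, X (n + 1) =
      (NormedSpace.exp ((t (n + 1) - t n) • Amat a₁ a₂ a₃ g₁ g₂)).mulVec
        (X n + lam n • Bvec))
    (hy : ∀ n, ∀ s ∈ Set.Ioc (t n) (t (n + 1)),
      ybar s = Cout ((NormedSpace.exp ((s - t n) • Amat a₁ a₂ a₃ g₁ g₂)).mulVec
        (X n + lam n • Bvec))) :
    Filter.limsup ybar Filter.atTop ≤
      g₁ * g₂ / (a₂ * a₃) * lamStar / (1 - Real.exp (-a₁ * Tstar)) := by
  have ht : Monotone t := monotone_nat_of_le_succ fun n => by linarith [hT n]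
  have htop : Tendsto t atTop atTop := tendsto_atTop_of_le_sub hTstar hT
  have hlamStar : 0 ≤ lamStar := (hlam 0).1.trans (hlam 0).2
  set z : ℕ → ℝ → Fin 3 → ℝ := fun n => pkFlow a₁ a₂ a₃ g₁ g₂ (X n + lam n • Bvec) with hz
  have hlink : ∀ n, z (n + 1) 0 = z n (t (n + 1) - t n) + lam (n + 1) • Bvec := fun n => by
    simp only [hz, pkFlow_zero, hX]; rfl
  have hderiv := fun n τ =>
    hasDerivAt_pi.1 (hasDerivAt_pkFlow a₁ a₂ a₃ g₁ g₂ (X n + lam n • Bvec) τ)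
  have h₁ := eventually_forall_le_of_impulsive (f := fun n s => z n s 0) ha₁ hTstar hlamStar hT
    (fun n τ => by simpa using hderiv n τ 0) (fun n => by simp [hlink, Bvec, (hlam _).2])
  have h₂ := eventually_forall_le_of_hasDerivAt (f := fun n s => z n s 1) ht htop ha₂ hg₁.le
    (fun n τ => by simpa using hderiv n τ 1) (fun n => by simp [hlink, Bvec]) h₁
  have h₃ := eventually_forall_le_of_hasDerivAt (f := fun n s => z n s 2) ht htop ha₃ hg₂.le
    (fun n τ => by simpa using hderiv n τ 2) (fun n => by simp [hlink, Bvec]) h₂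
  have hκ : 0 < 1 - Real.exp (-a₁ * Tstar) := sub_pos.2 (Real.exp_lt_one_iff.2 (by nlinarith))
  have hK : 0 ≤ g₂ * (g₁ * (lamStar / (1 - Real.exp (-a₁ * Tstar))) / a₂) / a₃ := by
    positivity
  calc limsup ybar atTop
      ≤ g₂ * (g₁ * (lamStar / (1 - Real.exp (-a₁ * Tstar))) / a₂) / a₃ :=
        limsup_le_of_forall_gt_of_mem_Ioc ht htop hy hK h₃
    _ = g₁ * g₂ / (a₂ * a₃) * lamStar / (1 - Real.exp (-a₁ * Tstar)) := by ring
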